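/- For every real number b, the function F(b) = φ(b)/Φ(−b) − b is differentiable at b with derivative F′(b) = r(b)·F(b) − 1, and this derivative is strictly negative. -/

import Mathlib

open MeasureTheory Filter

/-!
Writing `Q(b) = Φ(-b) = ∫_b^∞ φ` and `r = φ(b)/Q(b)`, the quotient rule with `φ' = -tφ` and
`Q' = -φ` gives `F' = r (r - b) - 1`. The sign comes from the positivity of the variance of the
standard normal truncated to `(b, ∞)`: integrating by parts, `∫_b^∞ t φ = φ(b)` and
`∫_b^∞ t² φ = b φ(b) + Q(b)`, so `0 < ∫_b^∞ (t - r)² φ = Q(b) (1 + b r - r²)`.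
-/

/-- Standard normal density. -/
noncomputable def phi (x : ℝ) : ℝ := Real.exp (-x ^ 2 / 2) / Real.sqrt (2 * Real.pi)

/-- Standard normal cumulative distribution function. -/
noncomputable def Phi (x : ℝ) : ℝ := ∫ t in Set.Iio x, phi t

/-- Mills-type ratio. -/
noncomputable def r (b : ℝ) : ℝ := phi b / Phi (-b)

/-- The deficit transformation `F`. -/
noncomputable def F (b : ℝ) : ℝ := phi b / Phi (-b) - b

open Real Set Topology

lemma phi_eq (x : ℝ) : phi x = (√(2 * π))⁻¹ * exp (-(1 / 2) * x ^ 2) := by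
  unfold phi; rw [div_eq_inv_mul]; ring_nf

lemma phi_pos (x : ℝ) : 0 < phi x := by
  unfold phi; positivity

lemma continuous_phi : Continuous phi := by
  unfold phi; fun_prop

lemma phi_neg (x : ℝ) : phi (-x) = phi x := by
  simp only [phi, neg_sq]

lemma hasDerivAt_phi (x : ℝ) : HasDerivAt phi (-x * phi x) x := by
  have h : HasDerivAt (fun y : ℝ => -y ^ 2 / 2) (-x) x :=
    ((hasDerivAt_pow 2 x).neg.div_const 2).congr_deriv (by ring)
  exact (h.exp.div_const _).congr_deriv (by unfold phi; ring)

lemma integrable_pow_mul_phi (n : ℕ) : Integrable fun x => x ^ n * phi x := by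
  have h := (integrable_rpow_mul_exp_neg_mul_sq (by norm_num : (0 : ℝ) < 1 / 2)
    (neg_one_lt_zero.trans_le n.cast_nonneg)).const_mul (√(2 * π))⁻¹
  refine h.congr (Eventually.of_forall fun x => ?_)
  simp only [phi_eq, rpow_natCast]; ring

lemma integrable_phi : Integrable phi := by
  simpa using integrable_pow_mul_phi 0

lemma integrable_mul_phi : Integrable fun x => x * phi x := by
  simpa using integrable_pow_mul_phi 1

lemma tendsto_pow_mul_phi_atTop (n : ℕ) : Tendsto (fun x => x ^ n * phi x) atTop (𝓝 0) := by
  have h := ((rpow_mul_exp_neg_mul_sq_isLittleO_exp_neg (by norm_num : (0 : ℝ) < 1 / 2)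
    n).tendsto_zero_of_tendsto (tendsto_exp_atBot.comp
      (tendsto_id.const_mul_atTop_of_neg (by norm_num : -(1 / 2 : ℝ) < 0)))).const_mul
    (√(2 * π))⁻¹
  rw [mul_zero] at h
  refine h.congr fun x => ?_
  simp only [phi_eq, rpow_natCast]; ring

lemma tendsto_phi_atTop : Tendsto phi atTop (𝓝 0) := by
  simpa using tendsto_pow_mul_phi_atTop 0

lemma Phi_pos (x : ℝ) : 0 < Phi x := by
  rw [Phi, setIntegral_pos_iff_support_of_nonneg_ae
    (Eventually.of_forall fun t => (phi_pos t).le) integrable_phi.integrableOn]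
  have hsupport : Function.support phi = univ :=
    Function.support_eq_univ fun t => (phi_pos t).ne'
  simp [hsupport]

lemma Phi_neg_eq_integral_Ioi (b : ℝ) : Phi (-b) = ∫ t in Ioi b, phi t := by
  rw [Phi, ← integral_Iic_eq_integral_Iio, ← integral_comp_neg_Ioi]
  simp only [phi_neg]

lemma hasDerivAt_Phi (x : ℝ) : HasDerivAt Phi (phi x) x := by
  have hPhi : ∀ y, Phi y = Phi 0 + ∫ t in (0 : ℝ)..y, phi t := fun y => by
    rw [← intervalIntegral.integral_Iic_sub_Iic integrable_phi.integrableOn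
      integrable_phi.integrableOn, Phi, Phi, ← integral_Iic_eq_integral_Iio,
      ← integral_Iic_eq_integral_Iio]
    ring
  have h := intervalIntegral.integral_hasDerivAt_right (a := 0) (b := x)
    integrable_phi.intervalIntegrable (continuous_phi.stronglyMeasurableAtFilter _ _)
    continuous_phi.continuousAt
  exact (h.const_add (Phi 0)).congr_of_eventuallyEq (Eventually.of_forall hPhi)

lemma integral_Ioi_mul_phi (b : ℝ) : ∫ t in Ioi b, t * phi t = phi b := by
  have h := integral_Ioi_of_hasDerivAt_of_tendsto' (a := b) (f := -phi) (f' := fun t => t * phi t)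
    (fun x _ => (hasDerivAt_phi x).neg.congr_deriv (by ring))
    integrable_mul_phi.integrableOn tendsto_phi_atTop.neg
  simpa using h

lemma integral_Ioi_sq_mul_phi (b : ℝ) :
    ∫ t in Ioi b, t ^ 2 * phi t = b * phi b + Phi (-b) := by
  have hderiv (x : ℝ) : HasDerivAt (fun t => -(t * phi t)) (x ^ 2 * phi x - phi x) x :=
    ((hasDerivAt_id' x).mul (hasDerivAt_phi x)).neg.congr_deriv (by ring)
  have h := integral_Ioi_of_hasDerivAt_of_tendsto' (a := b) (fun x _ => hderiv x)
    ((integrable_pow_mul_phi 2).sub integrable_phi).integrableOn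
    (by simpa using (tendsto_pow_mul_phi_atTop 1).neg)
  rw [integral_sub (integrable_pow_mul_phi 2).integrableOn integrable_phi.integrableOn,
    ← Phi_neg_eq_integral_Ioi] at h
  linarith

lemma integrable_sq_sub_mul_phi (c : ℝ) : Integrable fun t => (t - c) ^ 2 * phi t := by
  have h : Integrable fun t => t ^ 2 * phi t - 2 * c * (t * phi t) + c ^ 2 * phi t :=
    ((integrable_pow_mul_phi 2).sub (integrable_mul_phi.const_mul (2 * c))).add
      (integrable_phi.const_mul (c ^ 2))
  exact h.congr (Eventually.of_forall fun t => by ring)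

lemma integral_Ioi_sq_sub_mul_phi (b c : ℝ) :
    ∫ t in Ioi b, (t - c) ^ 2 * phi t
      = b * phi b + Phi (-b) - 2 * c * phi b + c ^ 2 * Phi (-b) := by
  have hexpand : (fun t => (t - c) ^ 2 * phi t)
      = fun t => t ^ 2 * phi t - 2 * c * (t * phi t) + c ^ 2 * phi t :=
    funext fun t => by ring
  have h : IntegrableOn (fun t => t ^ 2 * phi t - 2 * c * (t * phi t)) (Ioi b) :=
    ((integrable_pow_mul_phi 2).sub (integrable_mul_phi.const_mul (2 * c))).integrableOn
  rw [hexpand, integral_add h (integrable_phi.const_mul _).integrableOn,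
    integral_sub (integrable_pow_mul_phi 2).integrableOn
      (integrable_mul_phi.const_mul _).integrableOn,
    integral_const_mul, integral_const_mul, integral_Ioi_mul_phi, integral_Ioi_sq_mul_phi,
    ← Phi_neg_eq_integral_Ioi]

lemma integral_Ioi_sq_sub_mul_phi_pos (b c : ℝ) : 0 < ∫ t in Ioi b, (t - c) ^ 2 * phi t := by
  rw [setIntegral_pos_iff_support_of_nonneg_ae
    (Eventually.of_forall fun t => mul_nonneg (sq_nonneg _) (phi_pos t).le)
    (integrable_sq_sub_mul_phi c).integrableOn]
  have hsub : Ioi (max b c) ⊆ Function.support (fun t => (t - c) ^ 2 * phi t) ∩ Ioi b :=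
    fun t ht => by
      rw [mem_Ioi, max_lt_iff] at ht
      exact ⟨(mul_pos (pow_pos (sub_pos.mpr ht.2) 2) (phi_pos t)).ne', ht.1⟩
  calc (0 : ENNReal) < volume (Ioi (max b c)) := by simp
    _ ≤ _ := measure_mono hsub

lemma r_mul_sub_lt_one (b : ℝ) : r b * (r b - b) < 1 := by
  have hQ := Phi_pos (-b)
  have hrQ : r b * Phi (-b) = phi b := div_mul_cancel₀ _ hQ.ne'
  have h := integral_Ioi_sq_sub_mul_phi_pos b (r b)
  rw [integral_Ioi_sq_sub_mul_phi, ← hrQ] at h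
  nlinarith

lemma hasDerivAt_r (b : ℝ) : HasDerivAt r (r b * (r b - b)) b := by
  have hQ := Phi_pos (-b)
  have hQ' : HasDerivAt (fun x => Phi (-x)) (-phi b) b :=
    ((hasDerivAt_Phi (-b)).comp b (hasDerivAt_neg b)).congr_deriv (by rw [phi_neg]; ring)
  exact ((hasDerivAt_phi b).div hQ' hQ.ne').congr_deriv (by unfold r; field_simp; ring)

/-- `F` is differentiable at every real `b` with derivative `F′(b) = r(b)·F(b) − 1`,
and this derivative is strictly negative. -/
theorem F_hasDerivAt_neg (b : ℝ) :
    HasDerivAt F (r b * F b - 1) b ∧ r b * F b - 1 < 0 := by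
  have hF : F b = r b - b := rfl
  rw [hF]
  exact ⟨(hasDerivAt_r b).sub (hasDerivAt_id b), by linarith [r_mul_sub_lt_one b]⟩
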